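/- Let M be a finite monoid and P ⊆ M³, and let (T₁,σ₁,ρ₁) and (T₂,σ₂,ρ₂) be well-marked nested trees over M such that there is a marked gap-embedding h from (T₁,σ₁,ρ₁) to (T₂,σ₂,ρ₂). Then the graph interpreted from T₁ restricted to its marked leaves is an induced subgraph of the graph interpreted from T₂ restricted to its marked leaves: the restriction of h to marked leaves is an injective map preserving both adjacency and non-adjacency between the two interpreted graphs. -/

import Mathlib

namespace P2601

/-- A relation is a well-quasi-ordering if every infinite sequence admits
`i < j` with `f i ≤ f j`. -/
def IsWqo {X : Type*} (le : X → X → Prop) : Prop :=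
  ∀ f : ℕ → X, ∃ i j : ℕ, i < j ∧ le (f i) (f j)

/-- Finite rooted ordered binary trees with edge labels in `α`:
a node carries the labels of its left and right edges. -/
inductive BT (α : Type) : Type
  | leaf : BT α
  | node : α → BT α → α → BT α → BT α

namespace BT
variable {α : Type}

/-- Nodes of a tree, encoded as lists of directions from the root
(`false` = left, `true` = right). -/
def valid : BT α → List Bool → Prop
  | _, [] => True
  | .leaf, _ :: _ => False
  | .node _ l _ _, false :: p => valid l p
  | .node _ _ _ r, true :: p => valid r p

/-- Subtree rooted at a position. -/
def sub : BT α → List Bool → BT α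
  | t, [] => t
  | .leaf, _ :: _ => .leaf
  | .node _ l _ _, false :: p => sub l p
  | .node _ _ _ r, true :: p => sub r p

/-- Leaf positions. -/
def IsLeafPos (t : BT α) (p : List Bool) : Prop := t.valid p ∧ t.sub p = .leaf

/-- Product (in `M`, through the morphism determined by `μ`) of the edge
labels read along the downward path `p`. -/
def prodW {M : Type} [Monoid M] (μ : α → M) : BT α → List Bool → M
  | _, [] => 1
  | .leaf, _ :: _ => 1
  | .node a l _ _, false :: p => μ a * prodW μ l p
  | .node _ _ c r, true :: p => μ c * prodW μ r p

/-- A linear tree: every internal node has at most one non-leaf child. -/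
def IsLinear : BT α → Prop
  | .leaf => True
  | .node _ l _ r => (l = .leaf ∧ IsLinear r) ∨ (r = .leaf ∧ IsLinear l)

end BT

/-- `π_T(x,y)`: the product of the edge labels (through `μ`) along the
downward path from the node `x` to its descendant `y`. -/
def pi {α M : Type} [Monoid M] (μ : α → M) (t : BT α) (x y : List Bool) : M :=
  BT.prodW μ (t.sub x) (y.drop x.length)

/-- Strict ancestor relation on positions (strict prefix). -/
def SP (x y : List Bool) : Prop := x <+: y ∧ x ≠ y

/-- Longest common prefix: the least common ancestor of two nodes. -/
def lcp : List Bool → List Bool → List Bool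
  | a :: x, b :: y => if a = b then a :: lcp x y else []
  | _, _ => []

/-- `x` lies strictly to the left of `y` in the sibling (left-to-right) order. -/
def LeftOf (x y : List Bool) : Prop :=
  ∃ p : List Bool, (p ++ [false]) <+: x ∧ (p ++ [true]) <+: y

/-- `σ(x:y)`: the minimum split value of the nodes strictly between `x` and its
strict descendant `y`, and `N+1` if there is no such node. -/
def gap (N : ℕ) (σ : List Bool → ℕ) (x y : List Bool) : ℕ :=
  if h : (Finset.Ioo x.length y.length).Nonempty then
    (Finset.Ioo x.length y.length).inf' h (fun k => σ (y.take k))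
  else N + 1

/-- A split of height `N`: every node receives a value in `{1,…,N}`. -/
def IsSplit {α : Type} (N : ℕ) (t : BT α) (σ : List Bool → ℕ) : Prop :=
  ∀ p, t.valid p → 1 ≤ σ p ∧ σ p ≤ N

/-- `x` and `y` are `k`-neighbours: both have split value `k`, they are on a
common branch, and the split values strictly between them are `≥ k`. -/
def KNbr (N : ℕ) (σ : List Bool → ℕ) (k : ℕ) (x y : List Bool) : Prop :=
  σ x = k ∧ σ y = k ∧
    (x = y ∨ (SP x y ∧ k ≤ gap N σ x y) ∨ (SP y x ∧ k ≤ gap N σ y x))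

/-- Forward Ramseyan split. -/
def FR {α M : Type} [Monoid M] (μ : α → M) (N : ℕ) (t : BT α)
    (σ : List Bool → ℕ) : Prop :=
  ∀ k, 1 ≤ k → k ≤ N → ∀ x y x' y' : List Bool,
    t.valid x → t.valid y → t.valid x' → t.valid y' →
    KNbr N σ k x y → KNbr N σ k x x' → KNbr N σ k x y' →
    KNbr N σ k y x' → KNbr N σ k y y' → KNbr N σ k x' y' →
    SP x y → SP x' y' →
    pi μ t x y = pi μ t x y * pi μ t x' y'

/-- Gap-embedding between trees with splits: a tree embedding (preserving the
ancestor relation, least common ancestors and the sibling order) satisfying the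
root gap property and the edge gap property. -/
def IsGapEmb {α β : Type} (N : ℕ) (t₁ : BT α) (σ₁ : List Bool → ℕ)
    (t₂ : BT β) (σ₂ : List Bool → ℕ) (h : List Bool → List Bool) : Prop :=
  (∀ p, t₁.valid p → t₂.valid (h p)) ∧
  (∀ p q, t₁.valid p → t₁.valid q → h p = h q → p = q) ∧
  (∀ p q, t₁.valid p → t₁.valid q → SP p q → SP (h p) (h q)) ∧
  (∀ p q, t₁.valid p → t₁.valid q → h (lcp p q) = lcp (h p) (h q)) ∧
  (∀ p q, t₁.valid p → t₁.valid q → LeftOf p q → LeftOf (h p) (h q)) ∧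
  σ₁ [] ≤ gap N σ₂ [] (h []) ∧
  (∀ p b, t₁.valid (p ++ [b]) → σ₁ (p ++ [b]) ≤ gap N σ₂ (h p) (h (p ++ [b])))

/-- Markings of nodes. -/
inductive Mark : Type
  | marked | separating | dummy
deriving DecidableEq

/-- Well-marked nested tree condition. -/
def WellMarked {α : Type} (N : ℕ) (t : BT α) (σ : List Bool → ℕ)
    (ρ : List Bool → Mark) : Prop :=
  ρ [] = .marked ∧
  (∀ p q, t.valid p → t.valid q → ρ p = .marked → ρ q = .marked →
    ρ (lcp p q) = .marked) ∧
  (∀ k, 1 ≤ k → k ≤ N → ∀ x y z₁, t.valid x → t.valid y → t.valid z₁ →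
    ρ x = .marked → ρ y = .marked → SP x z₁ → SP z₁ y →
    k < gap N σ x z₁ → σ z₁ = k → k ≤ gap N σ z₁ y →
    ∃ z₂ z₃, t.valid z₂ ∧ t.valid z₃ ∧ SP z₁ z₂ ∧ z₂ <+: z₃ ∧ z₃ <+: y ∧
      σ z₂ = k ∧ σ z₃ = k ∧ k < gap N σ z₁ z₂ ∧ k ≤ gap N σ z₂ z₃ ∧
      k ≤ gap N σ z₃ y ∧ ρ z₁ = .marked ∧
      (ρ z₂ = .marked ∨ ρ z₂ = .separating))

/-- `z` is the closest ancestor of `x` having split value `k`. -/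
def ClosestAnc (σ : List Bool → ℕ) (k : ℕ) (x z : List Bool) : Prop :=
  z <+: x ∧ σ z = k ∧ ∀ w, w <+: x → σ w = k → w <+: z

/-- Marked gap-embedding between marked nested trees. -/
def IsMarkedGapEmb {M : Type} [Monoid M] (N : ℕ)
    (t₁ : BT M) (σ₁ : List Bool → ℕ) (ρ₁ : List Bool → Mark)
    (t₂ : BT M) (σ₂ : List Bool → ℕ) (ρ₂ : List Bool → Mark)
    (h : List Bool → List Bool) : Prop :=
  IsGapEmb N t₁ σ₁ t₂ σ₂ h ∧
  -- sends the root to the root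
  h [] = [] ∧
  -- maps leaves to leaves
  (∀ p, t₁.IsLeafPos p → t₂.IsLeafPos (h p)) ∧
  -- respects the marking
  (∀ p, t₁.valid p → ρ₁ p = ρ₂ (h p)) ∧
  -- respects local products
  (∀ p b, t₁.valid (p ++ [b]) → t₂.valid (h p ++ [b]) →
    pi id t₁ p (p ++ [b]) = pi id t₂ (h p) (h p ++ [b])) ∧
  -- respects neighbourhood products
  (∀ k, 1 ≤ k → k ≤ N → ∀ x z z', t₁.valid x →
    ClosestAnc σ₁ k x z → ClosestAnc σ₂ k (h x) z' →
    pi id t₁ z x = pi id t₂ z' (h x)) ∧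
  -- gluing on non-dummy nodes
  (∀ p b, t₁.valid (p ++ [b]) → ρ₁ (p ++ [b]) ≠ .dummy →
    ∃ b', h (p ++ [b]) = h p ++ [b'])

/-- `L`-bounded marked nested tree: every path of consecutive non-dummy nodes
has length at most `L`. -/
def LBounded {α : Type} (L : ℕ) (t : BT α) (ρ : List Bool → Mark) : Prop :=
  ∀ p q : List Bool, t.valid (p ++ q) →
    (∀ i, i ≤ q.length → ρ (p ++ q.take i) ≠ .dummy) → q.length ≤ L

/-- The edge relation of the graph interpreted from a tree by the monoid
interpretation determined by `μ` and `P ⊆ M³`. -/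
def IPEdge {α M : Type} [Monoid M] (μ : α → M) (P : Set (M × M × M))
    (t : BT α) (x y : List Bool) : Prop :=
  (LeftOf x y ∧ (pi μ t [] (lcp x y), pi μ t (lcp x y) x, pi μ t (lcp x y) y) ∈ P) ∨
  (LeftOf y x ∧ (pi μ t [] (lcp y x), pi μ t (lcp y x) y, pi μ t (lcp y x) x) ∈ P)

/-- One-hole contexts of binary trees (used to represent boughs: a bough is the
tree fragment between `b₀` and `b_n`, the hole being placed below `b_n`). -/
inductive CT (α : Type) : Type
  | hole : CT α
  | nodeL : α → CT α → α → BT α → CT α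
  | nodeR : α → BT α → α → CT α → CT α

namespace CT
variable {α : Type}

/-- Position of the hole. -/
def holePos : CT α → List Bool
  | .hole => []
  | .nodeL _ c _ _ => false :: c.holePos
  | .nodeR _ _ _ c => true :: c.holePos

/-- Plugging a tree into the hole. -/
def plug : CT α → BT α → BT α
  | .hole, s => s
  | .nodeL a c b r, s => .node a (c.plug s) b r
  | .nodeR a l b c, s => .node a l b (c.plug s)

end CT

/-- A bough of level `k`, represented by the one-hole context `c` (the hole
sits at the last backbone node `b_n`) together with its split `σ`: the root and
the hole position are backbone nodes (split value `k`), every node on the path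
from the root to the hole has split value `≥ k`, and the dimension is `≥ 1`. -/
def IsBough {α : Type} (N k : ℕ) (c : CT α) (σ : List Bool → ℕ) : Prop :=
  c.holePos ≠ [] ∧
  (∀ p, (c.plug .leaf).valid p → 1 ≤ σ p ∧ σ p ≤ N) ∧
  σ [] = k ∧ σ c.holePos = k ∧
  ∀ j, 0 < j → j < c.holePos.length → k ≤ σ (c.holePos.take j)

/-- Dimension of a bough: the number of backbone nodes below the root. -/
def boughDim {α : Type} (k : ℕ) (c : CT α) (σ : List Bool → ℕ) : ℕ :=
  ((Finset.Icc 1 c.holePos.length).filter fun j => σ (c.holePos.take j) = k).card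

/-- `j` is the depth of a backbone node of the bough. -/
def Backbone {α : Type} (k : ℕ) (c : CT α) (σ : List Bool → ℕ) (j : ℕ) : Prop :=
  j ≤ c.holePos.length ∧ σ (c.holePos.take j) = k

/-- `m` is the first idempotent value `π(b₀,b₁)` of the bough. -/
def FirstIdem {M : Type} [Monoid M] (k : ℕ) (c : CT M) (σ : List Bool → ℕ)
    (m : M) : Prop :=
  ∃ j, 0 < j ∧ j ≤ c.holePos.length ∧ σ (c.holePos.take j) = k ∧
    (∀ j', 0 < j' → j' < j → σ (c.holePos.take j') ≠ k) ∧
    m = pi id (c.plug .leaf) [] (c.holePos.take j)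

/-- A context `C[□]` in which boughs are plugged. -/
structure BCtx (M : Type) where
  cRoot : CT M
  σRoot : List Bool → ℕ
  tLeft : BT M
  σLeft : List Bool → ℕ
  tRight : BT M
  σRight : List Bool → ℕ
  mLeft : M
  mRight : M

/-- The tree `C[B]`. -/
def BCtx.plugB {M : Type} (C : BCtx M) (c : CT M) : BT M :=
  C.cRoot.plug (c.plug (BT.node C.mLeft C.tLeft C.mRight C.tRight))

/-- The split induced on `C[B]`. -/
def BCtx.plugSplit {M : Type} (C : BCtx M) (c : CT M) (σ : List Bool → ℕ) :
    List Bool → ℕ :=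
  fun p =>
    if C.cRoot.holePos.isPrefixOf p then
      let q := p.drop C.cRoot.holePos.length
      if c.holePos.isPrefixOf q then
        match q.drop c.holePos.length with
        | [] => σ q
        | false :: rest => C.σLeft rest
        | true :: rest => C.σRight rest
      else σ q
    else C.σRoot p

/-- Two boughs of level `k` are compatible: same first idempotent value, and
every context making the first forward Ramseyan makes the second forward
Ramseyan. -/
def Compatible {M : Type} [Monoid M] (N k : ℕ) (c : CT M) (σ : List Bool → ℕ)
    (c' : CT M) (σ' : List Bool → ℕ) : Prop :=
  (∀ m, FirstIdem k c σ m ↔ FirstIdem k c' σ' m) ∧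
  ∀ C : BCtx M, FR id N (C.plugB c) (C.plugSplit c σ) →
    FR id N (C.plugB c') (C.plugSplit c' σ')

/-- A good bough with respect to the interpretation `I_P`. -/
def GoodBough {M : Type} [Monoid M] (P : Set (M × M × M)) (N k : ℕ)
    (C : BCtx M) (c : CT M) (σ : List Bool → ℕ) : Prop :=
  ∃ (c' : CT M) (σ' : List Bool → ℕ), IsBough N k c' σ' ∧
    Compatible N k c σ c' σ' ∧
  ∃ h : List Bool → List Bool,
    -- h is an embedding of graphs from I_P(C[B]) to I_P(C[H])
    (∀ x, (C.plugB c).IsLeafPos x → (C.plugB c').IsLeafPos (h x)) ∧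
    (∀ x y, (C.plugB c).IsLeafPos x → (C.plugB c).IsLeafPos y →
      h x = h y → x = y) ∧
    (∀ x y, (C.plugB c).IsLeafPos x → (C.plugB c).IsLeafPos y →
      (IPEdge id P (C.plugB c) x y ↔ IPEdge id P (C.plugB c') (h x) (h y))) ∧
    -- h is the identity on the leaves of C[□]
    (∀ p, ¬ (C.cRoot.holePos <+: p) → (C.plugB c).IsLeafPos p → h p = p) ∧
    (∀ q, (C.plugB c).IsLeafPos (C.cRoot.holePos ++ c.holePos ++ false :: q) →
      h (C.cRoot.holePos ++ c.holePos ++ false :: q) =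
        C.cRoot.holePos ++ c'.holePos ++ false :: q) ∧
    (∀ q, (C.plugB c).IsLeafPos (C.cRoot.holePos ++ c.holePos ++ true :: q) →
      h (C.cRoot.holePos ++ c.holePos ++ true :: q) =
        C.cRoot.holePos ++ c'.holePos ++ true :: q) ∧
    -- three consecutive blocks of H have no leaf in the image of h
    ∃ j₀ j₁ j₂ j₃, Backbone k c' σ' j₀ ∧ Backbone k c' σ' j₁ ∧
      Backbone k c' σ' j₂ ∧ Backbone k c' σ' j₃ ∧
      j₀ < j₁ ∧ j₁ < j₂ ∧ j₂ < j₃ ∧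
      (∀ j, Backbone k c' σ' j →
        ¬ (j₀ < j ∧ j < j₁) ∧ ¬ (j₁ < j ∧ j < j₂) ∧ ¬ (j₂ < j ∧ j < j₃)) ∧
      (∀ x, (C.plugB c').IsLeafPos x →
        (C.cRoot.holePos ++ c'.holePos.take j₀) <+: x →
        ¬ ((C.cRoot.holePos ++ c'.holePos.take j₃) <+: x) →
        ∀ y, (C.plugB c).IsLeafPos y → h y ≠ x)

/-! ### Classes of finite graphs -/

/-- A finite graph: a number of vertices together with a simple graph on them. -/
def FinGraph : Type := (n : ℕ) × SimpleGraph (Fin n)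

/-- Labelled induced-subgraph embedding between labelled graphs. -/
def LabEmbOn {VG VH X : Type} (le : X → X → Prop)
    (adjG : VG → VG → Prop) (adjH : VH → VH → Prop)
    (lG : VG → X) (lH : VH → X) : Prop :=
  ∃ f : VG → VH, Function.Injective f ∧
    (∀ u v, adjG u v ↔ adjH (f u) (f v)) ∧ ∀ v, le (lG v) (lH (f v))

/-- The `(X,le)`-labelled graphs with underlying graph in `Cl` are WQO under
labelled induced-subgraph embeddings. -/
def ClassWqoWith (Cl : Set FinGraph) (X : Type) (le : X → X → Prop) : Prop :=
  ∀ G : ℕ → FinGraph, (∀ i, G i ∈ Cl) → ∀ l : (i : ℕ) → Fin (G i).1 → X,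
    ∃ i j : ℕ, i < j ∧ LabEmbOn le (G i).2.Adj (G j).2.Adj (l i) (l j)

/-- 2-well-quasi-ordered class. -/
def TwoWqoClass (Cl : Set FinGraph) : Prop :=
  ∀ X : Type, Nonempty (X ≃ Fin 2) → ClassWqoWith Cl X Eq

/-- ∀-well-quasi-ordered class. -/
def ForallWqoClass (Cl : Set FinGraph) : Prop :=
  ∀ (X : Type) (le : X → X → Prop), Reflexive le → Transitive le → IsWqo le →
    ClassWqoWith Cl X le

/-- The graph `(V, adj)` is (isomorphic to) the interpretation of a tree. -/
def InImageOn {α M : Type} [Monoid M] (μ : α → M) (P : Set (M × M × M))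
    (V : Type) (adj : V → V → Prop) : Prop :=
  ∃ (T : BT α) (e : V → List Bool), Function.Injective e ∧
    (∀ v, T.IsLeafPos (e v)) ∧ (∀ p, T.IsLeafPos p → ∃ v, e v = p) ∧
    ∀ u v, adj u v ↔ IPEdge μ P T (e u) (e v)

/-- The image of the monoid interpretation `(μ, P)`, as a class of graphs. -/
def ImageClass {α M : Type} [Monoid M] (μ : α → M) (P : Set (M × M × M)) :
    Set FinGraph :=
  {G | InImageOn μ P (Fin G.1) G.2.Adj}

/-- Hereditary class (closed under induced subgraphs). -/
def HereditaryClass (Cl : Set FinGraph) : Prop :=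
  ∀ G ∈ Cl, ∀ H : FinGraph,
    (∃ f : Fin H.1 → Fin G.1, Function.Injective f ∧
      ∀ u v, H.2.Adj u v ↔ G.2.Adj (f u) (f v)) → H ∈ Cl


/-! ### Regular and periodic sequences of graphs -/

/-- The edge relation of the `r`-th graph `G^r` of the regular sequence
`(G₀, ℓ, C₀, F₀)`, on vertex set `Fin m × Fin r`. -/
def regAdj {m : ℕ} {Sig : Type} (G₀ : SimpleGraph (Fin m)) (ℓ : Fin m → Sig)
    (C₀ F₀ : Set (Sig × Sig)) (r : ℕ) :
    (Fin m × Fin r) → (Fin m × Fin r) → Prop := fun a b =>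
  (a.2 = b.2 ∧ G₀.Adj a.1 b.1) ∨
  ((a.2 : ℕ) + 1 = (b.2 : ℕ) ∧ (ℓ a.1, ℓ b.1) ∈ C₀) ∨
  ((b.2 : ℕ) + 1 = (a.2 : ℕ) ∧ (ℓ b.1, ℓ a.1) ∈ C₀) ∨
  ((a.2 : ℕ) + 1 < (b.2 : ℕ) ∧ (ℓ a.1, ℓ b.1) ∈ F₀) ∨
  ((b.2 : ℕ) + 1 < (a.2 : ℕ) ∧ (ℓ b.1, ℓ a.1) ∈ F₀)

/-- Labels of the vertices of `G^r`: the label in `Sig` together with the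
markers `▷` (first copy) and `◁` (last copy). -/
def regLabel {m : ℕ} {Sig : Type} (ℓ : Fin m → Sig) (r : ℕ) :
    Fin m × Fin r → Sig × Bool × Bool := fun a =>
  (ℓ a.1, decide ((a.2 : ℕ) = 0), decide ((a.2 : ℕ) = r - 1))

/-- The regular sequence `(G₀, ℓ, C₀, F₀)` is a regular antichain. -/
def IsRegularAntichain {m : ℕ} {Sig : Type} (G₀ : SimpleGraph (Fin m))
    (ℓ : Fin m → Sig) (C₀ F₀ : Set (Sig × Sig)) : Prop :=
  ∀ r s : ℕ, 1 ≤ r → 1 ≤ s → r ≠ s →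
    ¬ LabEmbOn Eq (regAdj G₀ ℓ C₀ F₀ r) (regAdj G₀ ℓ C₀ F₀ s)
        (regLabel ℓ r) (regLabel ℓ s)

/-- The arcs of the directed graph `H^r` associated with a regular sequence. -/
def regArc {m : ℕ} {Sig : Type} (G₀ : SimpleGraph (Fin m)) (ℓ : Fin m → Sig)
    (C₀ F₀ : Set (Sig × Sig)) (r : ℕ) :
    (Fin m × Fin r) → (Fin m × Fin r) → Prop := fun a b =>
  ¬ (regAdj G₀ ℓ C₀ F₀ r a b ↔ (ℓ a.1, ℓ b.1) ∈ F₀)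

/-- `i`-th letter of the infinite periodic word `w^ω`. -/
def perLetter {Sig : Type} {p : ℕ} (hp : 0 < p) (w : Fin p → Sig) (n : ℕ) : Sig :=
  w ⟨n % p, Nat.mod_lt n hp⟩

/-- The edge relation of the `r`-th graph `G_{w^r}` of the periodic sequence
`(w, C₀, F₀)`, on vertex set `Fin (r * p)`. -/
def perAdj {Sig : Type} {p : ℕ} (hp : 0 < p) (w : Fin p → Sig)
    (C₀ F₀ : Set (Sig × Sig)) (r : ℕ) :
    Fin (r * p) → Fin (r * p) → Prop := fun a b =>
  ((a : ℕ) + 1 = (b : ℕ) ∧ (perLetter hp w a, perLetter hp w b) ∈ C₀) ∨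
  ((b : ℕ) + 1 = (a : ℕ) ∧ (perLetter hp w b, perLetter hp w a) ∈ C₀) ∨
  ((a : ℕ) + 1 < (b : ℕ) ∧ (perLetter hp w a, perLetter hp w b) ∈ F₀) ∨
  ((b : ℕ) + 1 < (a : ℕ) ∧ (perLetter hp w b, perLetter hp w a) ∈ F₀)

/-- Labels of the vertices of `G_{w^r}`: unlabelled (`0`) except the first
vertex (`1`, for `▷`) and the last vertex (`2`, for `◁`). -/
def perLabel (n : ℕ) (i : Fin n) : ℕ :=
  if (i : ℕ) = 0 then 1 else if (i : ℕ) = n - 1 then 2 else 0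

/-- The periodic sequence `(w, C₀, F₀)` is a periodic antichain. -/
def IsPeriodicAntichain {Sig : Type} {p : ℕ} (hp : 0 < p) (w : Fin p → Sig)
    (C₀ F₀ : Set (Sig × Sig)) : Prop :=
  ∀ r s : ℕ, 1 ≤ r → 1 ≤ s → r ≠ s →
    ¬ LabEmbOn Eq (perAdj hp w C₀ F₀ r) (perAdj hp w C₀ F₀ s)
        (perLabel (r * p)) (perLabel (s * p))

/-! ### Existential first-order formulas over labelled graphs -/

/-- Quantifier-free formulas in the language of `Sig`-labelled graphs,
with variables in `α`. -/
inductive QF (Sig : Type) (α : Type) : Type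
  | tru : QF Sig α
  | eq : α → α → QF Sig α
  | edge : α → α → QF Sig α
  | lab : Sig → α → QF Sig α
  | not : QF Sig α → QF Sig α
  | and : QF Sig α → QF Sig α → QF Sig α
  | or : QF Sig α → QF Sig α → QF Sig α

/-- Evaluation of quantifier-free formulas in a labelled graph. -/
def QF.eval {Sig α V : Type} (adj : V → V → Prop) (lb : V → Sig)
    (ass : α → V) : QF Sig α → Prop
  | .tru => True
  | .eq i j => ass i = ass j
  | .edge i j => adj (ass i) (ass j)
  | .lab a i => lb (ass i) = a
  | .not φ => ¬ QF.eval adj lb ass φ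
  | .and φ ψ => QF.eval adj lb ass φ ∧ QF.eval adj lb ass ψ
  | .or φ ψ => QF.eval adj lb ass φ ∨ QF.eval adj lb ass ψ

/-- Existential first-order formulas: a block of `k` existential quantifiers
followed by a quantifier-free formula. -/
structure EF (Sig : Type) (α : Type) : Type where
  k : ℕ
  body : QF Sig (α ⊕ Fin k)

/-- Satisfaction of an existential formula in a labelled graph, under an
assignment of the free variables. -/
def EF.Realize {Sig α V : Type} (adj : V → V → Prop) (lb : V → Sig)
    (φ : EF Sig α) (ass : α → V) : Prop :=
  ∃ w : Fin φ.k → V, φ.body.eval adj lb (Sum.elim ass w)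

/-- Adjacency in the path graph on `n` vertices. -/
def pathAdj (n : ℕ) (i j : Fin n) : Prop :=
  (i : ℕ) + 1 = (j : ℕ) ∨ (j : ℕ) + 1 = (i : ℕ)

/-!
The products `π(a, b)` between a marked node `a` and a marked descendant `b` are preserved by `h`.
For a child `b` of `a` this is the local-product condition, once gluing and the preservation of
lcas and of the sibling order show that `h` maps the edge `a b` onto the edge leaving `h a` in the
same direction. Otherwise well-markedness supplies a marked node strictly between `a` and `b`,
and the path is split there. Marked nodes are closed under lcas and `h` preserves lcas and the
left-to-right order of leaves, so the three products that decide adjacency of marked leaves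
`x, y` in `I_P(T₁)` are those that decide adjacency of `h x, h y` in `I_P(T₂)`.
-/

namespace BT

variable {α M : Type} [Monoid M]

@[simp]
lemma sub_nil (t : BT α) : t.sub [] = t := by cases t <;> rfl

@[simp]
lemma prodW_nil (μ : α → M) (t : BT α) : prodW μ t [] = 1 := by cases t <;> rfl

lemma sub_append (t : BT α) (p q : List Bool) : t.sub (p ++ q) = (t.sub p).sub q := by
  induction p generalizing t with
  | nil => simp
  | cons b p ih => cases t <;> cases b <;> cases q <;> simp [sub, ih]

lemma valid_append (t : BT α) (p q : List Bool) :
    t.valid (p ++ q) ↔ t.valid p ∧ (t.sub p).valid q := by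
  induction p generalizing t with
  | nil => simp [valid]
  | cons b p ih => cases t <;> cases b <;> simp [valid, sub, ih]

lemma prodW_append (μ : α → M) (t : BT α) (p q : List Bool) :
    prodW μ t (p ++ q) = prodW μ t p * prodW μ (t.sub p) q := by
  induction p generalizing t with
  | nil => simp
  | cons b p ih => cases t <;> cases b <;> cases q <;> simp [prodW, sub, ih, mul_assoc]

lemma valid_of_prefix {t : BT α} {p q : List Bool} (hq : t.valid q) (hpq : p <+: q) :
    t.valid p := by
  obtain ⟨r, rfl⟩ := hpq
  exact ((valid_append t p r).mp hq).1

lemma valid_append_singleton {t : BT α} {p : List Bool} {b : Bool} (hb : t.valid (p ++ [b]))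
    (c : Bool) : t.valid (p ++ [c]) := by
  rw [valid_append] at hb ⊢
  refine ⟨hb.1, ?_⟩
  cases hsub : t.sub p <;> rw [hsub] at hb <;> cases b <;> cases c <;> simp_all [valid]

lemma IsLeafPos.eq_of_prefix {t : BT α} {x y : List Bool} (hx : t.IsLeafPos x) (hy : t.valid y)
    (hxy : x <+: y) : x = y := by
  obtain ⟨_ | ⟨c, r⟩, rfl⟩ := hxy
  · simp
  · have := ((valid_append t x (c :: r)).mp hy).2
    rw [hx.2] at this
    cases c <;> simp [valid] at this

end BT

lemma pi_self {α M : Type} [Monoid M] (μ : α → M) (t : BT α) (x : List Bool) :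
    pi μ t x x = 1 := by
  simp [pi]

lemma pi_mul_pi {α M : Type} [Monoid M] (μ : α → M) (t : BT α) {x y z : List Bool}
    (hxy : x <+: y) (hyz : y <+: z) : pi μ t x y * pi μ t y z = pi μ t x z := by
  obtain ⟨r, rfl⟩ := hxy
  obtain ⟨s, rfl⟩ := hyz
  simp [pi, BT.prodW_append, BT.sub_append]

lemma lcp_append (p : List Bool) (x y : List Bool) : lcp (p ++ x) (p ++ y) = p ++ lcp x y := by
  induction p with
  | nil => rfl
  | cons a p ih => simp [lcp, ih]

lemma lcp_comm (x y : List Bool) : lcp x y = lcp y x := by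
  induction x generalizing y with
  | nil => cases y <;> rfl
  | cons a x ih =>
    cases y with
    | nil => rfl
    | cons b y =>
      by_cases hab : a = b
      · simp [lcp, hab, ih]
      · simp [lcp, hab, Ne.symm hab]

lemma lcp_prefix_left (x y : List Bool) : lcp x y <+: x := by
  induction x generalizing y with
  | nil => simp [lcp]
  | cons a x ih =>
    cases y with
    | nil => simp [lcp]
    | cons b y => unfold lcp; split_ifs <;> simp [ih]

lemma lcp_prefix_right (x y : List Bool) : lcp x y <+: y :=
  lcp_comm x y ▸ lcp_prefix_left y x

lemma lcp_append_cons_of_ne (p x y : List Bool) {a b : Bool} (hab : a ≠ b) :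
    lcp (p ++ a :: x) (p ++ b :: y) = p := by
  simp [lcp_append, lcp, hab]

lemma leftOf_iff_lcp {x y : List Bool} :
    LeftOf x y ↔ lcp x y ++ [false] <+: x ∧ lcp x y ++ [true] <+: y := by
  refine ⟨?_, fun h => ⟨_, h⟩⟩
  rintro ⟨p, ⟨r, rfl⟩, ⟨s, rfl⟩⟩
  simp only [List.append_assoc, List.singleton_append,
    lcp_append_cons_of_ne p r s Bool.false_ne_true]
  exact ⟨⟨r, by simp⟩, ⟨s, by simp⟩⟩

lemma LeftOf.not_leftOf {x y : List Bool} (hxy : LeftOf x y) : ¬ LeftOf y x := by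
  intro hyx
  rw [leftOf_iff_lcp] at hxy hyx
  have hx := List.prefix_of_prefix_length_le hxy.1 (lcp_comm x y ▸ hyx.2) (by simp)
  simp at hx

lemma leftOf_or_leftOf {x y : List Bool} (hx : ¬ x <+: y) (hy : ¬ y <+: x) :
    LeftOf x y ∨ LeftOf y x := by
  obtain ⟨r, hr⟩ := lcp_prefix_left x y
  obtain ⟨s, hs⟩ := lcp_prefix_right x y
  generalize hu : lcp x y = u at hr hs
  subst hr hs
  rcases r with _ | ⟨c, r⟩
  · simp at hx
  rcases s with _ | ⟨d, s⟩
  · simp at hy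
  have hcd : c ≠ d := by
    rintro rfl
    simp [lcp_append, lcp] at hu
  cases c <;> cases d
  · exact absurd rfl hcd
  · exact .inl ⟨u, by simp, by simp⟩
  · exact .inr ⟨u, by simp, by simp⟩
  · exact absurd rfl hcd

lemma SP.length_lt {x y : List Bool} (h : SP x y) : x.length < y.length :=
  lt_of_le_of_ne h.1.length_le fun hl => h.2 (h.1.eq_of_length hl)

lemma le_gap {N m : ℕ} {σ : List Bool → ℕ} {x y : List Bool} (hm : m ≤ N + 1)
    (h : ∀ i, x.length < i → i < y.length → m ≤ σ (y.take i)) : m ≤ gap N σ x y := by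
  unfold gap
  split_ifs with hne
  · refine (Finset.le_inf'_iff hne _).mpr fun i hi => ?_
    rw [Finset.mem_Ioo] at hi
    exact h i hi.1 hi.2
  · exact hm

/-- The witness is the topmost node strictly between `a` and `b` of minimal split value. -/
lemma WellMarked.exists_marked_between {α : Type} {N : ℕ} {t : BT α} {σ : List Bool → ℕ}
    {ρ : List Bool → Mark} (hs : IsSplit N t σ) (hw : WellMarked N t σ ρ) {a b : List Bool}
    (hab : a <+: b) (hlen : a.length + 1 < b.length) (hb : t.valid b)
    (ha : ρ a = .marked) (hbm : ρ b = .marked) :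
    ∃ z, SP a z ∧ SP z b ∧ ρ z = .marked := by
  classical
  have hex : ∃ j, a.length < j ∧ j < b.length ∧
      ∀ i, a.length < i → i < b.length → σ (b.take j) ≤ σ (b.take i) := by
    obtain ⟨j, hj, hmin⟩ := (Finset.Ioo a.length b.length).exists_min_image
      (fun i => σ (b.take i)) ⟨a.length + 1, by simp [hlen]⟩
    rw [Finset.mem_Ioo] at hj
    exact ⟨j, hj.1, hj.2, fun i h1 h2 => hmin i (Finset.mem_Ioo.mpr ⟨h1, h2⟩)⟩
  obtain ⟨hja, hjb, hjmin⟩ := Nat.find_spec hex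
  set j := Nat.find hex
  set z := b.take j
  have hzlen : z.length = j := by simp [z]; omega
  have hzb : z <+: b := List.take_prefix _ _
  have haz : a <+: z := List.prefix_of_prefix_length_le hab hzb (by omega)
  have hvz := BT.valid_of_prefix hb hzb
  have hk := hs z hvz
  have hgap_az : σ z + 1 ≤ gap N σ a z := le_gap (by omega) fun i h1 h2 => by
    rw [hzlen] at h2
    rw [List.take_take, min_eq_left h2.le]
    refine lt_of_le_of_ne (hjmin i h1 (by omega)) fun heq => Nat.find_min hex h2 ⟨h1, by omega, ?_⟩
    intro i' h1' h2'
    rw [← heq]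
    exact hjmin i' h1' h2'
  have hgap_zb : σ z ≤ gap N σ z b := le_gap (by omega) fun i h1 h2 => hjmin i (by omega) h2
  have hspaz : SP a z := ⟨haz, fun h => by have := congrArg List.length h; omega⟩
  have hspzb : SP z b := ⟨hzb, fun h => by have := congrArg List.length h; omega⟩
  obtain ⟨-, -, -, -, -, -, -, -, -, -, -, -, hz, -⟩ :=
    hw.2.2 (σ z) hk.1 hk.2 a b z (BT.valid_of_prefix hb hab) hb hvz ha hbm hspaz hspzb
      hgap_az rfl hgap_zb
  exact ⟨z, hspaz, hspzb, hz⟩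

section GapEmb

variable {α β : Type} {N : ℕ} {t₁ : BT α} {t₂ : BT β} {σ₁ σ₂ : List Bool → ℕ}
  {h : List Bool → List Bool}

lemma IsGapEmb.append_prefix_map_append (he : IsGapEmb N t₁ σ₁ t₂ σ₂ h) {a : List Bool}
    {c : Bool} (hv : t₁.valid (a ++ [c])) : h a ++ [c] <+: h (a ++ [c]) := by
  obtain ⟨-, -, -, hlcp, hleft, -, -⟩ := he
  have hf := BT.valid_append_singleton hv false
  have ht := BT.valid_append_singleton hv true
  have hL := hleft _ _ hf ht ⟨a, by simp, by simp⟩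
  rw [leftOf_iff_lcp, ← hlcp _ _ hf ht, lcp_append_cons_of_ne a [] [] Bool.false_ne_true] at hL
  cases c
  exacts [hL.1, hL.2]

lemma IsGapEmb.leftOf_map_iff (he : IsGapEmb N t₁ σ₁ t₂ σ₂ h) {x y : List Bool}
    (hx : t₁.IsLeafPos x) (hy : t₁.IsLeafPos y) :
    LeftOf (h x) (h y) ↔ LeftOf x y := by
  obtain ⟨-, -, -, -, hleft, -, -⟩ := he
  refine ⟨fun hh => ?_, hleft x y hx.1 hy.1⟩
  have hxy : ¬ x <+: y := fun hp => by
    rw [hx.eq_of_prefix hy.1 hp] at hh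
    exact hh.not_leftOf hh
  have hyx : ¬ y <+: x := fun hp => by
    rw [hy.eq_of_prefix hx.1 hp] at hh
    exact hh.not_leftOf hh
  exact (leftOf_or_leftOf hxy hyx).resolve_right
    fun hl => hh.not_leftOf (hleft y x hy.1 hx.1 hl)

end GapEmb

section MarkedGapEmb

variable {M : Type} [Monoid M] {N : ℕ} {t₁ t₂ : BT M} {σ₁ σ₂ : List Bool → ℕ}
  {ρ₁ ρ₂ : List Bool → Mark} {h : List Bool → List Bool}

lemma IsMarkedGapEmb.map_append_of_ne_dummy (he : IsMarkedGapEmb N t₁ σ₁ ρ₁ t₂ σ₂ ρ₂ h)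
    {a : List Bool} {c : Bool} (hv : t₁.valid (a ++ [c])) (hρ : ρ₁ (a ++ [c]) ≠ .dummy) :
    h (a ++ [c]) = h a ++ [c] := by
  obtain ⟨c', hc'⟩ := he.2.2.2.2.2.2 a c hv hρ
  have hpre := he.1.append_prefix_map_append hv
  rw [hc'] at hpre ⊢
  simp_all

lemma IsMarkedGapEmb.pi_append_singleton (he : IsMarkedGapEmb N t₁ σ₁ ρ₁ t₂ σ₂ ρ₂ h)
    {a : List Bool} {c : Bool} (hv : t₁.valid (a ++ [c])) (hρ : ρ₁ (a ++ [c]) ≠ .dummy) :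
    pi id t₁ a (a ++ [c]) = pi id t₂ (h a) (h (a ++ [c])) := by
  have hmap := he.map_append_of_ne_dummy hv hρ
  rw [hmap]
  exact he.2.2.2.2.1 a c hv (hmap ▸ he.1.1 _ hv)

lemma IsMarkedGapEmb.pi_eq_of_marked (hs₁ : IsSplit N t₁ σ₁) (hw₁ : WellMarked N t₁ σ₁ ρ₁)
    (he : IsMarkedGapEmb N t₁ σ₁ ρ₁ t₂ σ₂ ρ₂ h) {a b : List Bool} (hab : a <+: b)
    (hb : t₁.valid b) (ha : ρ₁ a = .marked) (hbm : ρ₁ b = .marked) :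
    pi id t₁ a b = pi id t₂ (h a) (h b) := by
  induction hn : b.length - a.length using Nat.strong_induction_on generalizing a b with
  | _ n ih =>
    obtain ⟨r, rfl⟩ := hab
    rcases r with _ | ⟨c, _ | ⟨d, r⟩⟩
    · simp [pi_self]
    · exact he.pi_append_singleton hb (by simp [hbm])
    obtain ⟨z, haz, hzb, hz⟩ := hw₁.exists_marked_between hs₁ ⟨_, rfl⟩ (by simp) hb ha hbm
    have hvz := BT.valid_of_prefix hb hzb.1
    have hsp := he.1.2.2.1
    have := haz.length_lt
    have := hzb.length_lt
    rw [← pi_mul_pi id t₁ haz.1 hzb.1,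
      ih (z.length - a.length) (by omega) haz.1 hvz ha hz rfl,
      ih (_ - z.length) (by omega) hzb.1 hb hz hbm rfl,
      pi_mul_pi id t₂ (hsp _ _ (BT.valid_of_prefix hvz haz.1) hvz haz).1
        (hsp _ _ hvz hb hzb).1]

lemma IsMarkedGapEmb.pi_lcp_eq (hs₁ : IsSplit N t₁ σ₁) (hw₁ : WellMarked N t₁ σ₁ ρ₁)
    (he : IsMarkedGapEmb N t₁ σ₁ ρ₁ t₂ σ₂ ρ₂ h) {x y : List Bool} (hx : t₁.valid x)
    (hy : t₁.valid y) (hmx : ρ₁ x = .marked) (hmy : ρ₁ y = .marked) :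
    (pi id t₁ [] (lcp x y), pi id t₁ (lcp x y) x, pi id t₁ (lcp x y) y) =
      (pi id t₂ [] (lcp (h x) (h y)), pi id t₂ (lcp (h x) (h y)) (h x),
        pi id t₂ (lcp (h x) (h y)) (h y)) := by
  have hu := hw₁.2.1 x y hx hy hmx hmy
  have hvu := BT.valid_of_prefix hx (lcp_prefix_left x y)
  rw [← he.1.2.2.2.1 x y hx hy]
  refine Prod.ext ?_ (Prod.ext ?_ ?_)
  · simpa only [he.2.1] using he.pi_eq_of_marked hs₁ hw₁ List.nil_prefix hvu hw₁.1 hu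
  · exact he.pi_eq_of_marked hs₁ hw₁ (lcp_prefix_left x y) hx hu hmx
  · exact he.pi_eq_of_marked hs₁ hw₁ (lcp_prefix_right x y) hy hu hmy

end MarkedGapEmb

theorem marked_gapEmbedding_monotone_general (M : Type) [Monoid M]
    (N : ℕ) (P : Set (M × M × M))
    (t₁ t₂ : BT M) (σ₁ σ₂ : List Bool → ℕ) (ρ₁ ρ₂ : List Bool → Mark)
    (hs₁ : IsSplit N t₁ σ₁)
    (hw₁ : WellMarked N t₁ σ₁ ρ₁)
    (h : List Bool → List Bool)
    (hemb : IsMarkedGapEmb N t₁ σ₁ ρ₁ t₂ σ₂ ρ₂ h) :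
    (∀ x, t₁.IsLeafPos x → ρ₁ x = .marked →
      t₂.IsLeafPos (h x) ∧ ρ₂ (h x) = .marked) ∧
    (∀ x y, t₁.IsLeafPos x → ρ₁ x = .marked → t₁.IsLeafPos y →
      ρ₁ y = .marked → h x = h y → x = y) ∧
    (∀ x y, t₁.IsLeafPos x → ρ₁ x = .marked → t₁.IsLeafPos y → ρ₁ y = .marked →
      (IPEdge id P t₁ x y ↔ IPEdge id P t₂ (h x) (h y))) := by
  have ⟨hgap, _, hleaf, hmark, _⟩ := hemb
  refine ⟨fun x hx hm => ⟨hleaf x hx, hmark x hx.1 ▸ hm⟩,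
    fun x y hx _ hy _ => hgap.2.1 x y hx.1 hy.1, fun x y hx hmx hy hmy => ?_⟩
  unfold IPEdge
  rw [hgap.leftOf_map_iff hx hy, hgap.leftOf_map_iff hy hx,
    hemb.pi_lcp_eq hs₁ hw₁ hx.1 hy.1 hmx hmy, hemb.pi_lcp_eq hs₁ hw₁ hy.1 hx.1 hmy hmx]

/-- If `h` is a marked gap-embedding between well-marked nested trees, then the
graph interpreted from `T₁` restricted to its marked leaves is an induced
subgraph of the graph interpreted from `T₂` restricted to its marked leaves:
`h` restricted to marked leaves is injective and preserves both adjacency and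
non-adjacency. -/
theorem marked_gapEmbedding_monotone (M : Type) [Monoid M] [Fintype M]
    (N : ℕ) (P : Set (M × M × M))
    (t₁ t₂ : BT M) (σ₁ σ₂ : List Bool → ℕ) (ρ₁ ρ₂ : List Bool → Mark)
    (hs₁ : IsSplit N t₁ σ₁) (hs₂ : IsSplit N t₂ σ₂)
    (hf₁ : FR id N t₁ σ₁) (hf₂ : FR id N t₂ σ₂)
    (hw₁ : WellMarked N t₁ σ₁ ρ₁) (hw₂ : WellMarked N t₂ σ₂ ρ₂)
    (h : List Bool → List Bool)
    (hemb : IsMarkedGapEmb N t₁ σ₁ ρ₁ t₂ σ₂ ρ₂ h) :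
    (∀ x, t₁.IsLeafPos x → ρ₁ x = .marked →
      t₂.IsLeafPos (h x) ∧ ρ₂ (h x) = .marked) ∧
    (∀ x y, t₁.IsLeafPos x → ρ₁ x = .marked → t₁.IsLeafPos y →
      ρ₁ y = .marked → h x = h y → x = y) ∧
    (∀ x y, t₁.IsLeafPos x → ρ₁ x = .marked → t₁.IsLeafPos y → ρ₁ y = .marked →
      (IPEdge id P t₁ x y ↔ IPEdge id P t₂ (h x) (h y))) :=
  marked_gapEmbedding_monotone_general M N P t₁ t₂ σ₁ σ₂ ρ₁ ρ₂ hs₁ hw₁ h hemb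

end P2601
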